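/- arXiv:math/0205216 — 2 statements merged into one kernel-verified Lean document; each statement's English description precedes it below -/
import Mathlib

section
/- There is no morphism f on finite words over {1,2,3} with |f(1)| + |f(2)| + |f(3)| > 3 such that the Arshon sequence w is a fixed point of f, i.e., such that f(w) = w. -/
open List Filter

/-- Image of a letter in an odd (1-based) position under ψ. -/
def oddBlock : ℕ → List ℕ
  | 1 => [1, 2, 3]
  | 2 => [2, 3, 1]
  | 3 => [3, 1, 2]
  | _ => []

/-- Image of a letter in an even (1-based) position under ψ. -/
def evenBlock : ℕ → List ℕ
  | 1 => [3, 2, 1]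
  | 2 => [1, 3, 2]
  | 3 => [2, 1, 3]
  | _ => []

/-- The Arshon map ψ: replace the letter at each odd (1-based) position by its
`oddBlock`, and the letter at each even position by its `evenBlock`. -/
def psi (l : List ℕ) : List ℕ :=
  (l.zipIdx.map fun p => if p.2 % 2 = 0 then oddBlock p.1 else evenBlock p.1).flatten

/-- The Arshon sequence `w = lim ψ^k(1)` as an infinite word: since
`|ψ^[n+1] [1]| = 3^(n+1) > n`, the `n`-th letter (0-based) is well defined. -/
def arshon (n : ℕ) : ℕ := (psi^[n + 1] [1]).getD n 0

/-- A word over the alphabet {1,2,3}. -/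
def Word123 (l : List ℕ) : Prop := ∀ a ∈ l, a = 1 ∨ a = 2 ∨ a = 3

/-- A morphism on finite words over {1,2,3}. -/
def IsMorphism123 (f : List ℕ → List ℕ) : Prop :=
  (∀ u v, f (u ++ v) = f u ++ f v) ∧ ∀ l, Word123 l → Word123 (f l)

/-- `f(w) = w` where `w` is the infinite Arshon word: the image of every finite
prefix of `w` is again a prefix of `w`, and these images have unbounded length
(so that `f(w)` is genuinely the infinite word `w`). -/
def FixesArshon (f : List ℕ → List ℕ) : Prop :=
  (∀ n, f ((List.range n).map arshon)
      = (List.range (f ((List.range n).map arshon)).length).map arshon) ∧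
  Tendsto (fun n => (f ((List.range n).map arshon)).length) atTop atTop

/-- The infinite word `s` is obtained by iterating the morphism `f` on the
letter 1: `f(1)` begins with 1, `|f^k(1)| → ∞`, and `s = lim f^k(1)`. -/
def IterLimit (f : List ℕ → List ℕ) (s : ℕ → ℕ) : Prop :=
  (∃ t, f [1] = 1 :: t) ∧
  Tendsto (fun k => (f^[k] [1]).length) atTop atTop ∧
  ∀ k n, n < (f^[k] [1]).length → (f^[k] [1]).getD n 0 = s n

/-! Let `S = |f(1)| + |f(2)| + |f(3)|`. As `w` begins with `123 132 312 321 312`, the word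
`f(w) = w` begins with `f(1)f(2)f(3) f(1)f(3)f(2) f(3)f(1)f(2) f(3)f(2)f(1) f(3)f(1)f(2)`; in
particular the factor of length `S` at position `2S` reappears at `4S`. Modulo 3 the Arshon word
satisfies `w(3m + r) ≡ w(m) + r` for even `m` and `w(3m + r) ≡ w(m) + 2 - r` for odd `m`, and with
this a repetition of that shape forces `S` to be a power of 3, by descent. Writing `S = 3e` with
`e` odd, the two occurrences of each `f(x)` displayed above then disagree in two consecutive
letters as soon as `|f(x)| ≥ 2`, so `S ≤ 3`. -/

-- `i` is the 0-based position, so `oddBlock` is used at even `i`.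
def arshonBlock (i x : ℕ) : List ℕ := if i % 2 = 0 then oddBlock x else evenBlock x

-- `ψ` applied to a factor whose first letter stands at position `k`.
def psiFrom (k : ℕ) (l : List ℕ) : List ℕ :=
  ((l.zipIdx k).map fun p => arshonBlock p.2 p.1).flatten

theorem psi_eq_psiFrom (l : List ℕ) : psi l = psiFrom 0 l := rfl

theorem psiFrom_cons (k x : ℕ) (l : List ℕ) :
    psiFrom k (x :: l) = arshonBlock k x ++ psiFrom (k + 1) l := rfl

theorem psiFrom_append (k : ℕ) (u v : List ℕ) :
    psiFrom k (u ++ v) = psiFrom k u ++ psiFrom (k + u.length) v := by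
  simp [psiFrom, zipIdx_append]

theorem length_arshonBlock (i : ℕ) {x : ℕ} (hx : x = 1 ∨ x = 2 ∨ x = 3) :
    (arshonBlock i x).length = 3 := by
  rcases hx with rfl | rfl | rfl <;> by_cases hi : i % 2 = 0 <;>
    simp [arshonBlock, hi, oddBlock, evenBlock]

theorem word123_arshonBlock (i x : ℕ) : Word123 (arshonBlock i x) := by
  unfold Word123 arshonBlock
  match x with
  | 1 | 2 | 3 => split <;> simp [oddBlock, evenBlock]
  | 0 | _ + 4 => split <;> simp [oddBlock, evenBlock]

theorem word123_psiFrom (k : ℕ) (l : List ℕ) : Word123 (psiFrom k l) := by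
  simp only [Word123, psiFrom, mem_flatten, List.mem_map]
  rintro a ⟨_, ⟨p, -, rfl⟩, ha⟩
  exact word123_arshonBlock p.2 p.1 a ha

theorem length_psiFrom {l : List ℕ} (hl : Word123 l) (k : ℕ) :
    (psiFrom k l).length = 3 * l.length := by
  induction l generalizing k with
  | nil => rfl
  | cons x l ih =>
    rw [psiFrom_cons, length_append, length_arshonBlock k (hl x mem_cons_self),
      ih (fun a ha => hl a (mem_cons_of_mem x ha)), length_cons]
    ring

theorem getD_psi_three_mul_add {l : List ℕ} (hl : Word123 l) {m r : ℕ} (hm : m < l.length)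
    (hr : r < 3) : (psi l).getD (3 * m + r) 0 = (arshonBlock m l[m]).getD r 0 := by
  have hsplit : l = l.take m ++ l[m] :: l.drop (m + 1) := by simp
  have hword : Word123 (l.take m) := fun a ha => hl a (mem_of_mem_take ha)
  have hlen : (l.take m).length = m := by simp; omega
  have hblock := length_arshonBlock m (hl _ (getElem_mem hm))
  conv_lhs => rw [hsplit, psi_eq_psiFrom, psiFrom_append, psiFrom_cons]
  rw [getD_append_right _ _ _ _ (by rw [length_psiFrom hword, hlen]; omega), length_psiFrom hword,
    hlen, zero_add, Nat.add_sub_cancel_left, getD_append _ _ _ _ (by omega)]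

theorem psi_prefix {u v : List ℕ} (h : u <+: v) : psi u <+: psi v := by
  obtain ⟨t, rfl⟩ := h
  rw [psi_eq_psiFrom, psi_eq_psiFrom, psiFrom_append]
  exact prefix_append _ _

theorem word123_psi_iterate (k : ℕ) : Word123 (psi^[k] [1]) := by
  cases k with
  | zero => simp [Word123]
  | succ k => rw [Function.iterate_succ_apply']; exact word123_psiFrom 0 _

theorem length_psi_iterate (k : ℕ) : (psi^[k] [1]).length = 3 ^ k := by
  induction k with
  | zero => rfl
  | succ k ih =>
    rw [Function.iterate_succ_apply', psi_eq_psiFrom, length_psiFrom (word123_psi_iterate k), ih,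
      pow_succ, mul_comm]

theorem psi_iterate_prefix_succ (k : ℕ) : psi^[k] [1] <+: psi^[k + 1] [1] := by
  induction k with
  | zero => exact ⟨[2, 3], rfl⟩
  | succ k ih =>
    rw [Function.iterate_succ_apply', Function.iterate_succ_apply' _ (k + 1)]
    exact psi_prefix ih

theorem psi_iterate_prefix_of_le {k k' : ℕ} (h : k ≤ k') : psi^[k] [1] <+: psi^[k'] [1] := by
  induction h with
  | refl => exact prefix_refl _
  | step _ ih => exact ih.trans (psi_iterate_prefix_succ _)

theorem arshon_eq_getD_psi_iterate {n k : ℕ} (h : n < 3 ^ k) :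
    arshon n = (psi^[k] [1]).getD n 0 := by
  have hn : n < (psi^[n + 1] [1]).length := by
    rw [length_psi_iterate]
    exact (Nat.lt_pow_self (by norm_num)).trans (Nat.pow_lt_pow_succ (by norm_num))
  have hk : n < (psi^[k] [1]).length := by rwa [length_psi_iterate]
  rw [arshon, getD_eq_getElem _ _ hn, getD_eq_getElem _ _ hk]
  rcases le_total (n + 1) k with hle | hle
  · exact (psi_iterate_prefix_of_le hle).getElem hn
  · exact ((psi_iterate_prefix_of_le hle).getElem hk).symm

theorem arshon_eq_one_or_two_or_three (n : ℕ) : arshon n = 1 ∨ arshon n = 2 ∨ arshon n = 3 := by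
  have hn : n < (psi^[n + 1] [1]).length := by
    rw [length_psi_iterate]
    exact (Nat.lt_pow_self (by norm_num)).trans (Nat.pow_lt_pow_succ (by norm_num))
  rw [arshon, getD_eq_getElem _ _ hn]
  exact word123_psi_iterate _ _ (getElem_mem hn)

theorem arshon_three_mul_add (m : ℕ) {r : ℕ} (hr : r < 3) :
    arshon (3 * m + r) = (arshonBlock m (arshon m)).getD r 0 := by
  have hm : m < 3 ^ (m + 1) :=
    (Nat.lt_pow_self (by norm_num)).trans (Nat.pow_lt_pow_succ (by norm_num))
  have hlen : m < (psi^[m + 1] [1]).length := by rwa [length_psi_iterate]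
  rw [arshon_eq_getD_psi_iterate (k := m + 2) (by rw [pow_succ]; omega),
    Function.iterate_succ_apply', getD_psi_three_mul_add (word123_psi_iterate _) hlen hr,
    arshon_eq_getD_psi_iterate hm, getD_eq_getElem _ _ hlen]

theorem arshon_three_mul_of_even {m : ℕ} (hm : m % 2 = 0) :
    arshon (3 * m) % 3 = arshon m % 3 ∧ arshon (3 * m + 1) % 3 = (arshon m + 1) % 3 ∧
      arshon (3 * m + 2) % 3 = (arshon m + 2) % 3 := by
  rw [arshon_three_mul_add m (by norm_num : 1 < 3), arshon_three_mul_add m (by norm_num : 2 < 3),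
    ← add_zero (3 * m), arshon_three_mul_add m (by norm_num : 0 < 3)]
  rcases arshon_eq_one_or_two_or_three m with hx | hx | hx <;> simp [hx, arshonBlock, hm, oddBlock]

theorem arshon_three_mul_of_odd {m : ℕ} (hm : m % 2 = 1) :
    arshon (3 * m) % 3 = (arshon m + 2) % 3 ∧ arshon (3 * m + 1) % 3 = (arshon m + 1) % 3 ∧
      arshon (3 * m + 2) % 3 = arshon m % 3 := by
  rw [arshon_three_mul_add m (by norm_num : 1 < 3), arshon_three_mul_add m (by norm_num : 2 < 3),
    ← add_zero (3 * m), arshon_three_mul_add m (by norm_num : 0 < 3)]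
  rcases arshon_eq_one_or_two_or_three m with hx | hx | hx <;> simp [hx, arshonBlock, hm, evenBlock]

theorem arshon_eq_of_arshon_three_mul_eq {m m' : ℕ} (hmm' : m % 2 = m' % 2)
    (h : arshon (3 * m) = arshon (3 * m')) : arshon m = arshon m' := by
  have := arshon_eq_one_or_two_or_three m
  have := arshon_eq_one_or_two_or_three m'
  rcases Nat.mod_two_eq_zero_or_one m with hm | hm
  · have := (arshon_three_mul_of_even hm).1
    have := (arshon_three_mul_of_even (hmm' ▸ hm)).1
    omega
  · have := (arshon_three_mul_of_odd hm).1
    have := (arshon_three_mul_of_odd (hmm' ▸ hm)).1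
    omega

theorem arshon_prefix_fifteen :
    (List.range 15).map arshon = [1, 2, 3, 1, 3, 2, 3, 1, 2, 3, 2, 1, 3, 1, 2] := by
  rw [map_congr_left fun n hn => arshon_eq_getD_psi_iterate (k := 3) (by simp at hn; omega)]
  rfl

theorem exists_eq_three_pow_of_arshon_repeat {s : ℕ} (hs : 0 < s)
    (h : ∀ i < s, arshon (2 * s + i) = arshon (4 * s + i)) : ∃ t, s = 3 ^ t := by
  induction s using Nat.strong_induction_on with
  | _ s ih =>
  obtain ⟨q, rfl | rfl | rfl⟩ : ∃ q, s = 3 * q ∨ s = 3 * q + 1 ∨ s = 3 * q + 2 := ⟨s / 3, by omega⟩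
  · obtain ⟨t, rfl⟩ := ih q (by omega) (by omega) fun i hi =>
      arshon_eq_of_arshon_three_mul_eq (by omega) (by convert h (3 * i) (by omega) using 2 <;> ring)
    exact ⟨t + 1, by ring⟩
  · rcases Nat.eq_zero_or_pos q with rfl | hq
    · exact ⟨0, rfl⟩
    have h₂ : arshon (3 * (2 * q + 1) + 1) = arshon (3 * (4 * q + 2)) := by
      convert h 2 (by omega) using 2 <;> ring
    have h₃ : arshon (3 * (2 * q + 1) + 2) = arshon (3 * (4 * q + 2) + 1) := by
      convert h 3 (by omega) using 2 <;> ring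
    have := arshon_three_mul_of_odd (m := 2 * q + 1) (by omega)
    have := arshon_three_mul_of_even (m := 4 * q + 2) (by omega)
    omega
  · rcases Nat.eq_zero_or_pos q with rfl | hq
    · have h₁ : arshon 5 = arshon 9 := h 1 (by omega)
      rw [arshon_eq_getD_psi_iterate (k := 3) (by norm_num : 5 < 3 ^ 3),
        arshon_eq_getD_psi_iterate (k := 3) (by norm_num : 9 < 3 ^ 3)] at h₁
      exact absurd h₁ (by decide)
    have h₂ : arshon (3 * (2 * q + 2)) = arshon (3 * (4 * q + 3) + 1) := by
      convert h 2 (by omega) using 2 <;> ring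
    have h₃ : arshon (3 * (2 * q + 2) + 1) = arshon (3 * (4 * q + 3) + 2) := by
      convert h 3 (by omega) using 2 <;> ring
    have := arshon_three_mul_of_even (m := 2 * q + 2) (by omega)
    have := arshon_three_mul_of_odd (m := 4 * q + 3) (by omega)
    omega

theorem length_eq_sum_map_length_singleton {α β : Type*} {f : List α → List β}
    (hf : ∀ u v, f (u ++ v) = f u ++ f v) (u : List α) :
    (f u).length = (u.map fun x => (f [x]).length).sum := by
  have hnil : f [] = [] := by simpa using congrArg length (hf [] [])
  induction u with
  | nil => simp [hnil]
  | cons x u ih => rw [← singleton_append, hf, length_append, ih]; simp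

theorem FixesArshon.getElem_image {f : List ℕ → List ℕ} (hfix : FixesArshon f)
    (hf : ∀ u v, f (u ++ v) = f u ++ f v) {N : ℕ} {u v : List ℕ}
    (h : u ++ v <+: (List.range N).map arshon) {j : ℕ} (hj : j < (f v).length) :
    (f v)[j] = arshon ((f u).length + j) := by
  obtain ⟨t, ht⟩ := h
  have himage := hfix.1 N
  rw [← ht, hf, hf] at himage
  have hlt : (f u).length + j < (f u ++ f v ++ f t).length := by simp; omega
  calc (f v)[j] = (f u ++ f v ++ f t)[(f u).length + j] := by
        rw [getElem_append_left (by simp; omega)]; simp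
    _ = arshon ((f u).length + j) := by rw [getElem_of_eq himage hlt]; simp

theorem FixesArshon.arshon_eq_of_image_occurrences {f : List ℕ → List ℕ} (hfix : FixesArshon f)
    (hf : ∀ u v, f (u ++ v) = f u ++ f v) {N : ℕ} {w u u' v : List ℕ}
    (hw : (List.range N).map arshon = w) (h : u ++ v <+: w) (h' : u' ++ v <+: w) {j n n' : ℕ}
    (hj : j < (f v).length) (hn : (f u).length + j = n) (hn' : (f u').length + j = n') :
    arshon n = arshon n' := by
  subst hw hn hn'
  exact (hfix.getElem_image hf h hj).symm.trans (hfix.getElem_image hf h' hj)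

theorem FixesArshon.exists_length_image_eq_three_pow {f : List ℕ → List ℕ}
    (hfix : FixesArshon f)
    (hf : ∀ u v, f (u ++ v) = f u ++ f v)
    (hS : 0 < (f [1]).length + (f [2]).length + (f [3]).length) :
    ∃ t, (f [1]).length + (f [2]).length + (f [3]).length = 3 ^ t := by
  have hlen := length_eq_sum_map_length_singleton hf
  refine exists_eq_three_pow_of_arshon_repeat hS fun i hi =>
    hfix.arshon_eq_of_image_occurrences hf arshon_prefix_fifteen (u := [1, 2, 3, 1, 3, 2])
      (u' := [1, 2, 3, 1, 3, 2, 3, 1, 2, 3, 2, 1]) (v := [3, 1, 2])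
      (by decide) (by decide) (j := i) ?_ ?_ ?_
  all_goals rw [hlen]; simp; omega

theorem FixesArshon.length_image_le_one {f : List ℕ → List ℕ} (hfix : FixesArshon f)
    (hf : ∀ u v, f (u ++ v) = f u ++ f v) {e : ℕ} (he : e % 2 = 1)
    (hS : (f [1]).length + (f [2]).length + (f [3]).length = 3 * e) :
    (f [1]).length ≤ 1 ∧ (f [2]).length ≤ 1 ∧ (f [3]).length ≤ 1 := by
  have hlen := length_eq_sum_map_length_singleton hf
  have occ := fun {u u' v : List ℕ} =>
    hfix.arshon_eq_of_image_occurrences hf arshon_prefix_fifteen (u := u) (u' := u') (v := v)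
  refine ⟨?_, ?_, ?_⟩ <;> by_contra! hlong
  · have occ₁ := @occ [] [1, 2, 3] [1] (by decide) (by decide)
    have h₀ : arshon 0 = arshon (3 * e) :=
      occ₁ (j := 0) (by omega) (by rw [hlen]; simp) (by rw [hlen]; simp; omega)
    have h₁ : arshon 1 = arshon (3 * e + 1) :=
      occ₁ (j := 1) (by omega) (by rw [hlen]; simp) (by rw [hlen]; simp; omega)
    have : arshon 0 = 1 := rfl
    have : arshon 1 = 2 := rfl
    have := arshon_three_mul_of_odd he
    omega
  · have occ₂ := @occ [1, 2, 3, 1, 3] [1, 2, 3, 1, 3, 2, 3, 1] [2] (by decide) (by decide)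
    have h₀ : arshon (3 * (2 * e - 1) + 1) = arshon (3 * (3 * e - 1) + 1) :=
      occ₂ (j := (f [2]).length - 2) (by omega) (by rw [hlen]; simp; omega)
        (by rw [hlen]; simp; omega)
    have h₁ : arshon (3 * (2 * e - 1) + 2) = arshon (3 * (3 * e - 1) + 2) :=
      occ₂ (j := (f [2]).length - 1) (by omega) (by rw [hlen]; simp; omega)
        (by rw [hlen]; simp; omega)
    have := arshon_three_mul_of_odd (m := 2 * e - 1) (by omega)
    have := arshon_three_mul_of_even (m := 3 * e - 1) (by omega)
    omega
  · have occ₃ := @occ [1, 2, 3, 1, 3, 2] [1, 2, 3, 1, 3, 2, 3, 1, 2] [3]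
      (by decide) (by decide)
    have h₀ : arshon (3 * (2 * e)) = arshon (3 * (3 * e)) :=
      occ₃ (j := 0) (by omega) (by rw [hlen]; simp; omega) (by rw [hlen]; simp; omega)
    have h₁ : arshon (3 * (2 * e) + 1) = arshon (3 * (3 * e) + 1) :=
      occ₃ (j := 1) (by omega) (by rw [hlen]; simp; omega) (by rw [hlen]; simp; omega)
    have := arshon_three_mul_of_even (m := 2 * e) (by omega)
    have := arshon_three_mul_of_odd (m := 3 * e) (by omega)
    omega

/-- There is no morphism `f` on finite words over {1,2,3} with
`|f(1)| + |f(2)| + |f(3)| > 3` such that the Arshon sequence is a fixed point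
of `f`, i.e. `f(w) = w`. -/
theorem arshon_no_fixing_morphism :
    ¬ ∃ f : List ℕ → List ℕ, IsMorphism123 f ∧
      (f [1]).length + (f [2]).length + (f [3]).length > 3 ∧
      FixesArshon f := by
  rintro ⟨f, ⟨hf, -⟩, hS, hfix⟩
  obtain ⟨t, ht⟩ := hfix.exists_length_image_eq_three_pow hf (by omega)
  obtain ⟨k, rfl⟩ : ∃ k, t = k + 1 := Nat.exists_eq_succ_of_ne_zero (by rintro rfl; omega)
  have := hfix.length_image_le_one hf (e := 3 ^ k) (Nat.odd_iff.mp (Odd.pow (by decide)))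
    (by rw [ht, pow_succ, mul_comm])
  omega
end

section
/- There is no morphism f on finite words over {1,3} such that f(1) begins with the letter 1, the lengths |f^k(1)| tend to infinity, and the σ-sequence w_σ equals lim_{k→∞} f^k(1); that is, w_σ cannot be obtained by iteration of a morphism. -/
/-!
In the 0-indexed σ-word `w`, the even letters `w(2m) = σ(2m+1)` alternate `1, 3, 1, 3, …` and
`w(2m+1) = w(m)`. Hence `w` contains no cube `aaa` with `|a| ≥ 2`: a period divisible by 4
halves on the odd positions, and any other period makes two even letters of opposite type
coincide. But `111` occurs in `w`, and the factors of a limit of iterates of `f` are closed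
under `f`; so the cube `f^k(1) f^k(1) f^k(1)` occurs in `w`, although `|f^k(1)| ≥ 2` for large `k`.
-/

open List Filter

/-- `σ(n)`: writing `n = 2^t * (4s + σ)` with `σ ∈ {1,3}` and `2^t` the largest
power of 2 dividing `n`, return `σ` (junk value 0 at `n = 0`). -/
def sigma (n : ℕ) : ℕ := (ordCompl[2] n) % 4

/-- The σ-sequence as an infinite word: its `n`-th letter (0-based) is `σ(n+1)`. -/
def sigmaSeq (n : ℕ) : ℕ := sigma (n + 1)

/-- A word over the alphabet {1,3}. -/
def Word13 (l : List ℕ) : Prop := ∀ a ∈ l, a = 1 ∨ a = 3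

/-- A morphism on finite words over {1,3}. -/
def IsMorphism13 (f : List ℕ → List ℕ) : Prop :=
  (∀ u v, f (u ++ v) = f u ++ f v) ∧ ∀ l, Word13 l → Word13 (f l)

lemma sigma_two_mul_add_one (m : ℕ) : sigma (2 * m + 1) = (2 * m + 1) % 4 := by
  simp [sigma, Nat.factorization_eq_zero_of_not_dvd (show ¬ 2 ∣ 2 * m + 1 by omega)]

lemma sigma_two_mul (k : ℕ) : sigma (2 * k) = sigma k := by
  simp [sigma, Nat.ordCompl_mul, Nat.prime_two.factorization_self]

lemma sigmaSeq_two_mul (m : ℕ) : sigmaSeq (2 * m) = (2 * m + 1) % 4 :=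
  sigma_two_mul_add_one m

lemma sigmaSeq_two_mul_add_one (m : ℕ) : sigmaSeq (2 * m + 1) = sigmaSeq m := by
  rw [sigmaSeq, show 2 * m + 1 + 1 = 2 * (m + 1) by ring, sigma_two_mul, sigmaSeq]

lemma sigmaSeq_two_mul_ne {a b : ℕ} (h : a % 2 ≠ b % 2) :
    sigmaSeq (2 * a) ≠ sigmaSeq (2 * b) := by
  rw [sigmaSeq_two_mul, sigmaSeq_two_mul]
  omega

def HasPeriodOn (s : ℕ → ℕ) (L i n : ℕ) : Prop :=
  ∀ j < n, s (i + j) = s (i + j + L)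

lemma HasPeriodOn.mono {s : ℕ → ℕ} {L i n m : ℕ} (h : HasPeriodOn s L i n) (hmn : m ≤ n) :
    HasPeriodOn s L i m :=
  fun j hj => h j (by omega)

-- The odd positions of the window carry the window of half the length and period.
lemma HasPeriodOn.sigmaSeq_half {M i : ℕ} (h : HasPeriodOn sigmaSeq (2 * M) i (4 * M)) :
    HasPeriodOn sigmaSeq M (i / 2) (2 * M) := by
  intro r hr
  have hj := h (2 * r + 1 - i % 2) (by omega)
  rwa [show i + (2 * r + 1 - i % 2) = 2 * (i / 2 + r) + 1 by omega,
    show 2 * (i / 2 + r) + 1 + 2 * M = 2 * (i / 2 + r + M) + 1 by ring,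
    sigmaSeq_two_mul_add_one, sigmaSeq_two_mul_add_one] at hj

lemma not_hasPeriodOn_sigmaSeq_two_mul_odd {M i : ℕ} (hM : Odd M) :
    ¬ HasPeriodOn sigmaSeq (2 * M) i 2 := by
  intro h
  obtain ⟨c, rfl⟩ := hM
  have hj := h (i % 2) (by omega)
  rw [show i + i % 2 = 2 * ((i + 1) / 2) by omega,
    show 2 * ((i + 1) / 2) + 2 * (2 * c + 1) = 2 * ((i + 1) / 2 + 2 * c + 1) by ring] at hj
  exact sigmaSeq_two_mul_ne (by omega) hj

-- With `L = 2c + 1` and `i + j = 2x`, the period links `σ(2x)` to `σ(x + c)` and then to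
-- `σ(2(x + L))`, but `x` and `x + L` have different parities.
lemma not_hasPeriodOn_sigmaSeq_odd {L i : ℕ} (hodd : Odd L) (hL : 2 ≤ L) :
    ¬ HasPeriodOn sigmaSeq L i (2 * L) := by
  intro h
  obtain ⟨c, rfl⟩ := hodd
  set x := (i + 1) / 2
  have h₁ := h (i % 2) (by omega)
  have h₂ := h (i % 2 + (2 * c + 1)) (by omega)
  rw [show i + i % 2 = 2 * x by omega, show 2 * x + (2 * c + 1) = 2 * (x + c) + 1 by ring,
    sigmaSeq_two_mul_add_one] at h₁
  rw [show i + (i % 2 + (2 * c + 1)) = 2 * (x + c) + 1 by omega,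
    show 2 * (x + c) + 1 + (2 * c + 1) = 2 * (x + 2 * c + 1) by ring,
    sigmaSeq_two_mul_add_one] at h₂
  exact sigmaSeq_two_mul_ne (show x % 2 ≠ (x + 2 * c + 1) % 2 by omega) (h₁.trans h₂)

theorem not_hasPeriodOn_sigmaSeq {L : ℕ} (hL : 2 ≤ L) (i : ℕ) :
    ¬ HasPeriodOn sigmaSeq L i (2 * L) := by
  induction L using Nat.strong_induction_on generalizing i with
  | _ L ih =>
    rcases Nat.even_or_odd L with ⟨M, rfl⟩ | hodd
    · rcases Nat.even_or_odd M with ⟨d, rfl⟩ | hM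
      · intro h
        rw [← two_mul] at h
        exact ih (d + d) (by omega) (by omega) (i / 2) (h.mono (by omega)).sigmaSeq_half
      · rw [← two_mul]
        exact fun h => not_hasPeriodOn_sigmaSeq_two_mul_odd hM (h.mono (by omega))
    · exact not_hasPeriodOn_sigmaSeq_odd hodd hL

def IsFactorAt (s : ℕ → ℕ) (u : List ℕ) (i : ℕ) : Prop :=
  ∀ j < u.length, u.getD j 0 = s (i + j)

namespace IsFactorAt

variable {s : ℕ → ℕ} {u : List ℕ} {i : ℕ}

lemma exists_of_isInfix {w : List ℕ} (hw : IsFactorAt s w i) (huw : u <:+: w) :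
    ∃ i', IsFactorAt s u i' := by
  obtain ⟨p, q, rfl⟩ := huw
  refine ⟨i + p.length, fun j hj => ?_⟩
  have hj' := hw (p.length + j) (by simp; omega)
  rwa [List.append_assoc, List.getD_append_right _ _ _ _ (by omega), Nat.add_sub_cancel_left,
    List.getD_append _ _ _ _ hj, ← add_assoc] at hj'

lemma isInfix {w : List ℕ} (hw : IsFactorAt s w 0) (hu : IsFactorAt s u i)
    (hle : i + u.length ≤ w.length) : u <:+: w := by
  refine ⟨w.take i, (w.drop i).drop u.length, ?_⟩
  suffices (w.drop i).take u.length = u by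
    calc w.take i ++ u ++ (w.drop i).drop u.length
        = w.take i ++ ((w.drop i).take u.length ++ (w.drop i).drop u.length) := by
          rw [this, List.append_assoc]
      _ = w := by simp only [List.take_append_drop]
  refine List.ext_getElem (by simp; omega) fun j hj hj' => ?_
  have hw' := hw (i + j) (by simp at hj; omega)
  rw [List.getElem_take, List.getElem_drop, ← List.getD_eq_getElem _ 0, hw', zero_add,
    ← hu j hj', List.getD_eq_getElem]

lemma hasPeriodOn_of_cube {a : List ℕ} (h : IsFactorAt s (a ++ a ++ a) i) :
    HasPeriodOn s a.length i (2 * a.length) := by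
  intro j hj
  rw [← h j (by simp; omega), add_assoc, ← h (j + a.length) (by simp; omega), List.append_assoc,
    List.getD_append_right a (a ++ a) 0 (j + a.length) (by omega), Nat.add_sub_cancel]
  rcases lt_or_ge j a.length with hja | hja
  · rw [List.getD_append _ _ _ _ hja, List.getD_append _ _ _ _ hja]
  · rw [List.getD_append_right _ _ _ _ hja, List.getD_append_right _ _ _ _ hja,
      List.getD_append _ _ _ _ (by omega)]

end IsFactorAt

lemma not_isFactorAt_sigmaSeq_cube {a : List ℕ} (ha : 2 ≤ a.length) (i : ℕ) :
    ¬ IsFactorAt sigmaSeq (a ++ a ++ a) i :=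
  fun h => not_hasPeriodOn_sigmaSeq ha i h.hasPeriodOn_of_cube

lemma iterate_append {f : List ℕ → List ℕ} (hf : ∀ u v, f (u ++ v) = f u ++ f v) (k : ℕ)
    (u v : List ℕ) : f^[k] (u ++ v) = f^[k] u ++ f^[k] v := by
  induction k generalizing u v with
  | zero => rfl
  | succ k ih => rw [Function.iterate_succ_apply, hf, ih, Function.iterate_succ_apply,
      Function.iterate_succ_apply]

namespace IterLimit

variable {f : List ℕ → List ℕ} {s : ℕ → ℕ}

lemma isFactorAt_iterate (h : IterLimit f s) (k : ℕ) : IsFactorAt s (f^[k] [1]) 0 := by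
  simpa [IsFactorAt] using h.2.2 k

-- Inside a long enough prefix `f^K(1) = p u q`, the word `f u` sits inside `f^(K+1)(1)`.
lemma exists_isFactorAt_apply (h : IterLimit f s) (hf : ∀ u v, f (u ++ v) = f u ++ f v)
    {u : List ℕ} {i : ℕ} (hu : IsFactorAt s u i) : ∃ i', IsFactorAt s (f u) i' := by
  obtain ⟨K, hK⟩ := (h.2.1.eventually_ge_atTop (i + u.length)).exists
  obtain ⟨p, q, hpuq⟩ := (h.isFactorAt_iterate K).isInfix hu hK
  have hfK := h.isFactorAt_iterate (K + 1)
  rw [Function.iterate_succ_apply', ← hpuq, hf, hf] at hfK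
  exact hfK.exists_of_isInfix (List.infix_append _ _ _)

lemma exists_isFactorAt_iterate (h : IterLimit f s) (hf : ∀ u v, f (u ++ v) = f u ++ f v)
    {u : List ℕ} {i : ℕ} (hu : IsFactorAt s u i) (k : ℕ) : ∃ i', IsFactorAt s (f^[k] u) i' := by
  induction k with
  | zero => exact ⟨i, hu⟩
  | succ k ih =>
    obtain ⟨i', hi'⟩ := ih
    rw [Function.iterate_succ_apply']
    exact h.exists_isFactorAt_apply hf hi'

end IterLimit

lemma sigmaSeq_isFactorAt_one_one_one : IsFactorAt sigmaSeq [1, 1, 1] 7 := by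
  have h7 : sigmaSeq 7 = 1 := by
    rw [sigmaSeq_two_mul_add_one 3, sigmaSeq_two_mul_add_one 1, sigmaSeq_two_mul_add_one 0]
    exact sigmaSeq_two_mul 0
  have h8 : sigmaSeq 8 = 1 := sigmaSeq_two_mul 4
  have h9 : sigmaSeq 9 = 1 := by rw [sigmaSeq_two_mul_add_one 4, sigmaSeq_two_mul 2]
  intro j hj
  simp only [List.length_cons, List.length_nil] at hj
  interval_cases j <;> simp [h7, h8, h9]

/-- The σ-sequence cannot be obtained by iteration of a morphism. -/
theorem sigmaSeq_not_obtained_by_iteration :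
    ¬ ∃ f : List ℕ → List ℕ, IsMorphism13 f ∧ IterLimit f sigmaSeq := by
  rintro ⟨f, ⟨hf, -⟩, h⟩
  obtain ⟨k, hk⟩ := (h.2.1.eventually_ge_atTop 2).exists
  obtain ⟨i, hi⟩ := h.exists_isFactorAt_iterate hf sigmaSeq_isFactorAt_one_one_one k
  rw [show [1, 1, 1] = [1] ++ [1] ++ [1] from rfl, iterate_append hf, iterate_append hf] at hi
  exact not_isFactorAt_sigmaSeq_cube hk i hi
end
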